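/- arXiv:1703.02470 — 2 statements merged into one kernel-verified Lean document; each statement's English description precedes it below -/
import Mathlib

section
/- Let n be even, let Γ_0,…,Γ_n ∈ M_s(ℂ) satisfy the Clifford relations Γ_AΓ_B + Γ_BΓ_A = 2δ_{AB}·1, let A be a commutative unital ℂ-algebra, let Y^0,…,Y^n ∈ A, and set Y := Σ_A Y^A ⊗ Γ_A ∈ A ⊗ M_s(ℂ). Then for every even m with m < n, the image of the (m+1)-fold tensor Y ⊗ Y ⊗ ⋯ ⊗ Y under the partial trace map tr : (A ⊗ M_s(ℂ))^{⊗(m+1)} → A^{⊗(m+1)} is zero. -/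
/-!
Expanding the tensor power multilinearly, every term is a multiple of the trace of a product
`Γ (r 0) ⋯ Γ (r m)` of `m + 1 ≤ n` gamma matrices. Such a product misses some index `C`, so the
odd number of factors makes it anticommute with `Γ C`; as `Γ C` is an involution, the trace of
the product equals its own negative and vanishes.
-/

open scoped TensorProduct

section Clifford

variable {𝕜 M ι : Type*} [Field 𝕜] [Ring M] [Module 𝕜 M] [DecidableEq ι]
  {Γ : ι → M}

lemma clifford_mul_self [NeZero (2 : 𝕜)]
    (hcliff : ∀ A B, Γ A * Γ B + Γ B * Γ A = (2 : 𝕜) • (if A = B then 1 else 0))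
    (C : ι) : Γ C * Γ C = 1 := by
  have h := hcliff C C
  rw [if_pos rfl, ← two_smul 𝕜] at h
  exact smul_right_injective M two_ne_zero h

lemma clifford_anticomm
    (hcliff : ∀ A B, Γ A * Γ B + Γ B * Γ A = (2 : 𝕜) • (if A = B then 1 else 0))
    {C D : ι} (hCD : C ≠ D) : Γ C * Γ D = -(Γ D * Γ C) := by
  have h := hcliff C D
  rw [if_neg hCD, smul_zero] at h
  exact eq_neg_of_add_eq_zero_left h

end Clifford

lemma mul_list_prod_of_anticomm {M : Type*} [Ring M] (X : M) (l : List M)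
    (hl : ∀ x ∈ l, X * x = -(x * X)) : X * l.prod = (-1) ^ l.length * (l.prod * X) := by
  induction l with
  | nil => simp
  | cons a t ih =>
    rw [List.forall_mem_cons] at hl
    rw [List.prod_cons, ← mul_assoc, hl.1, neg_mul, mul_assoc, ih hl.2, List.length_cons,
      pow_succ]
    simp only [mul_neg, mul_one, neg_mul, ← mul_assoc,
      ((Commute.neg_one_left a).pow_left t.length).eq]

lemma Matrix.trace_eq_zero_of_anticomm {n R : Type*} [Fintype n] [DecidableEq n] [CommRing R]
    [IsAddTorsionFree R]
    {X P : Matrix n n R} (hX : X * X = 1) (hXP : X * P = -(P * X)) : P.trace = 0 := by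
  rw [← self_eq_neg]
  calc P.trace = (X * (X * P)).trace := by rw [← mul_assoc, hX, one_mul]
    _ = (X * P * X).trace := Matrix.trace_mul_comm _ _
    _ = -P.trace := by rw [hXP, neg_mul, Matrix.trace_neg, mul_assoc, hX, mul_one]

lemma trace_clifford_prod_eq_zero {𝕜 ι σ : Type*} [Field 𝕜] [CharZero 𝕜] [DecidableEq ι]
    [Fintype σ] [DecidableEq σ] {Γ : ι → Matrix σ σ 𝕜}
    (hcliff : ∀ A B, Γ A * Γ B + Γ B * Γ A = (2 : 𝕜) • (if A = B then 1 else 0))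
    {k : ℕ} (hk : Odd k) (r : Fin k → ι) {C : ι} (hC : ∀ i, r i ≠ C) :
    (List.ofFn fun i => Γ (r i)).prod.trace = 0 := by
  refine Matrix.trace_eq_zero_of_anticomm (clifford_mul_self hcliff C) ?_
  have h := mul_list_prod_of_anticomm (Γ C) (List.ofFn fun i => Γ (r i)) <| by
    simp only [List.forall_mem_ofFn_iff]
    exact fun i => clifford_anticomm hcliff (hC i).symm
  rwa [List.length_ofFn, hk.neg_one_pow, neg_one_mul] at h

theorem stmt3_general {n s : ℕ}
    (Γ : Fin (n + 1) → Matrix (Fin s) (Fin s) ℂ)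
    (hcliff : ∀ A B, Γ A * Γ B + Γ B * Γ A = (2 : ℂ) • (if A = B then 1 else 0))
    (A : Type*) [CommRing A] [Algebra ℂ A]
    (Y : Fin (n + 1) → A)
    (m : ℕ) (hm : Even m) (hmn : m < n)
    (tr : PiTensorProduct ℂ (fun _ : Fin (m + 1) => A ⊗[ℂ] Matrix (Fin s) (Fin s) ℂ)
      →ₗ[ℂ] PiTensorProduct ℂ (fun _ : Fin (m + 1) => A))
    (htr : ∀ (a : Fin (m + 1) → A) (μ : Fin (m + 1) → Matrix (Fin s) (Fin s) ℂ),
      tr (PiTensorProduct.tprod ℂ fun i => a i ⊗ₜ[ℂ] μ i)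
        = (List.ofFn μ).prod.trace • PiTensorProduct.tprod ℂ a) :
    tr (PiTensorProduct.tprod ℂ fun _ : Fin (m + 1) => ∑ B, Y B ⊗ₜ[ℂ] Γ B) = 0 := by
  rw [MultilinearMap.map_sum, map_sum]
  refine Finset.sum_eq_zero fun r _ => ?_
  obtain ⟨C, hC⟩ : ∃ C, ∀ i, r i ≠ C := by
    by_contra! h
    exact hmn.not_ge (by simpa using Fintype.card_le_of_surjective r h)
  rw [htr, trace_clifford_prod_eq_zero hcliff hm.add_one r hC, zero_smul]

theorem stmt3 {n s : ℕ} (hn : Even n)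
    (Γ : Fin (n + 1) → Matrix (Fin s) (Fin s) ℂ)
    (hcliff : ∀ A B, Γ A * Γ B + Γ B * Γ A = (2 : ℂ) • (if A = B then 1 else 0))
    (A : Type*) [CommRing A] [Algebra ℂ A]
    (Y : Fin (n + 1) → A)
    (m : ℕ) (hm : Even m) (hmn : m < n)
    (tr : PiTensorProduct ℂ (fun _ : Fin (m + 1) => A ⊗[ℂ] Matrix (Fin s) (Fin s) ℂ)
      →ₗ[ℂ] PiTensorProduct ℂ (fun _ : Fin (m + 1) => A))
    (htr : ∀ (a : Fin (m + 1) → A) (μ : Fin (m + 1) → Matrix (Fin s) (Fin s) ℂ),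
      tr (PiTensorProduct.tprod ℂ fun i => a i ⊗ₜ[ℂ] μ i)
        = (List.ofFn μ).prod.trace • PiTensorProduct.tprod ℂ a) :
    tr (PiTensorProduct.tprod ℂ fun _ : Fin (m + 1) => ∑ B, Y B ⊗ₜ[ℂ] Γ B) = 0 :=
  stmt3_general Γ hcliff A Y m hm hmn tr htr
end

section
/- Let A be a unital associative ℂ-algebra with an involution * (a star algebra), let A^op be the opposite algebra, and consider the algebra A ⊗ A^op. Let m : A ⊗ A^op → A be the ℂ-linear map with m(a ⊗ b^op) = ab, and let θ : A ⊗ A^op → A ⊗ A^op be the conjugate-linear map with θ(a ⊗ b^op) = b* ⊗ (a*)^op. Then θ is multiplicative (θ(xy) = θ(x)θ(y) for all x, y ∈ A ⊗ A^op), and the set Pert(A) := { A ∈ A ⊗ A^op : m(A) = 1 and θ(A) = A } contains 1 ⊗ 1^op and is closed under the multiplication of A ⊗ A^op; i.e. Pert(A) is a submonoid of A ⊗ A^op. -/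
open scoped TensorProduct

theorem stmt13 {A : Type*} [Ring A] [Algebra ℂ A] [StarRing A] [StarModule ℂ A]
    (m : A ⊗[ℂ] Aᵐᵒᵖ →ₗ[ℂ] A)
    (hm : ∀ a b : A, m (a ⊗ₜ[ℂ] MulOpposite.op b) = a * b)
    (θ : A ⊗[ℂ] Aᵐᵒᵖ → A ⊗[ℂ] Aᵐᵒᵖ)
    (hθadd : ∀ x y, θ (x + y) = θ x + θ y)
    (hθsmul : ∀ (c : ℂ) x, θ (c • x) = (starRingEnd ℂ) c • θ x)
    (hθ : ∀ a b : A, θ (a ⊗ₜ[ℂ] MulOpposite.op b)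
      = star b ⊗ₜ[ℂ] MulOpposite.op (star a)) :
    -- θ is multiplicative
    (∀ x y, θ (x * y) = θ x * θ y)
    -- Pert(A) contains the unit 1 = 1 ⊗ 1ᵒᵖ
    ∧ (m 1 = 1 ∧ θ 1 = 1)
    -- Pert(A) is closed under multiplication
    ∧ (∀ x y : A ⊗[ℂ] Aᵐᵒᵖ, (m x = 1 ∧ θ x = x) → (m y = 1 ∧ θ y = y) →
        m (x * y) = 1 ∧ θ (x * y) = x * y) := by
  have hθ0 : θ 0 = 0 := by
    have h : θ 0 + θ 0 = 0 + θ 0 := by rw [← hθadd]; simp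
    exact add_right_cancel h
  -- θ is multiplicative
  have hθmul : ∀ x y, θ (x * y) = θ x * θ y := by
    intro x y
    induction x using TensorProduct.induction_on with
    | zero => simp [hθ0]
    | tmul a b =>
      induction b using MulOpposite.rec' with
      | h b =>
        induction y using TensorProduct.induction_on with
        | zero => simp [hθ0]
        | tmul c d =>
          induction d using MulOpposite.rec' with
          | h d =>
            rw [Algebra.TensorProduct.tmul_mul_tmul]
            have : MulOpposite.op b * MulOpposite.op d = MulOpposite.op (d * b) := rfl
            rw [this, hθ, hθ, hθ, Algebra.TensorProduct.tmul_mul_tmul]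
            have : MulOpposite.op (star a) * MulOpposite.op (star c)
                = MulOpposite.op (star c * star a) := rfl
            rw [this, star_mul, star_mul]
        | add u v hu hv =>
          rw [mul_add, hθadd, hu, hv, hθadd, mul_add]
    | add u v hu hv =>
      rw [add_mul, hθadd, hu, hv, hθadd, add_mul]
  -- key lemma for m
  have h1 : ∀ (a b : A) (y : A ⊗[ℂ] Aᵐᵒᵖ),
      m ((a ⊗ₜ[ℂ] MulOpposite.op b) * y) = a * m y * b := by
    intro a b y
    induction y using TensorProduct.induction_on with
    | zero => simp
    | tmul c d =>
      induction d using MulOpposite.rec' with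
      | h d =>
        rw [Algebra.TensorProduct.tmul_mul_tmul]
        have : MulOpposite.op b * MulOpposite.op d = MulOpposite.op (d * b) := rfl
        rw [this, hm, hm]
        noncomm_ring
    | add u v hu hv =>
      rw [mul_add, map_add, hu, hv, map_add, mul_add, add_mul]
  have hmmul : ∀ x y : A ⊗[ℂ] Aᵐᵒᵖ, m y = 1 → m (x * y) = m x := by
    intro x y hy
    induction x using TensorProduct.induction_on with
    | zero => simp
    | tmul a b =>
      induction b using MulOpposite.rec' with
      | h b => rw [h1, hy, mul_one, hm]
    | add u v hu hv =>
      rw [add_mul, map_add, hu, hv, map_add]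
  have hone : (1 : A ⊗[ℂ] Aᵐᵒᵖ) = (1 : A) ⊗ₜ[ℂ] MulOpposite.op (1 : A) :=
    Algebra.TensorProduct.one_def
  refine ⟨hθmul, ⟨?_, ?_⟩, ?_⟩
  · rw [hone, hm, one_mul]
  · rw [hone, hθ, star_one]
  · rintro x y ⟨hmx, hθx⟩ ⟨hmy, hθy⟩
    exact ⟨by rw [hmmul x y hmy, hmx], by rw [hθmul, hθx, hθy]⟩
end
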